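/- arXiv:2202.02407 — 2 statements merged into one kernel-verified Lean document; each statement's English description precedes it below -/
import Mathlib

section
/- For all real a and b, |μ(a) - μ(b)| ≤ μ'(b) · |a - b| · exp(|a - b|). -/
noncomputable def μ (z : ℝ) : ℝ := 1 / (1 + Real.exp (-z))

/-!
Since `μ' = 1 / (2 + eˣ + e⁻ˣ)` and each of `eˣ`, `e⁻ˣ` changes by a factor of at most `e^|x - b|`
between `x` and `b`, we get `μ'(x) ≤ e^|x - b| μ'(b)`; this is the integrated form of the
self-concordance inequality `|μ''| ≤ μ'`. On the interval between `a` and `b` the derivative is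
therefore at most `μ'(b) e^|a - b|`, and the mean value inequality concludes.
-/

open Real Set

lemma hasDerivAt_μ (x : ℝ) : HasDerivAt μ (1 / (2 + exp x + exp (-x))) x := by
  have hexp : HasDerivAt (fun z : ℝ => 1 + exp (-z)) (-exp (-x)) x := by
    simpa using ((hasDerivAt_exp (-x)).comp x (hasDerivAt_neg x)).const_add 1
  have hμ : HasDerivAt μ _ x := (hasDerivAt_const x (1 : ℝ)).fun_div hexp (by positivity)
  convert hμ using 1
  have hx : exp x * exp (-x) = 1 := by rw [← exp_add, add_neg_cancel, exp_zero]
  field_simp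
  linear_combination -hx

lemma deriv_μ (x : ℝ) : deriv μ x = 1 / (2 + exp x + exp (-x)) :=
  (hasDerivAt_μ x).deriv

lemma deriv_μ_nonneg (x : ℝ) : 0 ≤ deriv μ x := by
  rw [deriv_μ]
  positivity

lemma two_add_exp_add_exp_neg_le (x b : ℝ) :
    2 + exp b + exp (-b) ≤ exp |x - b| * (2 + exp x + exp (-x)) := by
  have hpos : exp b ≤ exp |x - b| * exp x := by
    rw [← exp_add]
    exact exp_le_exp.2 (by linarith [neg_abs_le (x - b)])
  have hneg : exp (-b) ≤ exp |x - b| * exp (-x) := by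
    rw [← exp_add]
    exact exp_le_exp.2 (by linarith [le_abs_self (x - b)])
  nlinarith [one_le_exp (abs_nonneg (x - b))]

lemma deriv_μ_le_exp_abs_sub_mul (x b : ℝ) : deriv μ x ≤ exp |x - b| * deriv μ b := by
  rw [deriv_μ, deriv_μ, mul_one_div, div_le_div_iff₀ (by positivity) (by positivity), one_mul]
  exact two_add_exp_add_exp_neg_le x b

theorem logistic_mean_value_bound (a b : ℝ) :
    |μ a - μ b| ≤ deriv μ b * |a - b| * Real.exp (|a - b|) := by
  have hbound : ∀ x ∈ uIcc b a, ‖deriv μ x‖ ≤ exp |a - b| * deriv μ b := by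
    intro x hx
    rw [norm_of_nonneg (deriv_μ_nonneg x)]
    calc deriv μ x ≤ exp |x - b| * deriv μ b := deriv_μ_le_exp_abs_sub_mul x b
      _ ≤ exp |a - b| * deriv μ b :=
        mul_le_mul_of_nonneg_right (exp_le_exp.2 (abs_sub_left_of_mem_uIcc hx))
          (deriv_μ_nonneg b)
  have hmvt := (convex_uIcc b a).norm_image_sub_le_of_norm_deriv_le
    (fun x _ => (hasDerivAt_μ x).differentiableAt) hbound left_mem_uIcc right_mem_uIcc
  rw [norm_eq_abs, norm_eq_abs] at hmvt
  linarith
end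

section
/- For any θ ≠ 0 with |θ| ≥ z*, where z* maximizes f(z) = μ'(z)z² over ℝ, we have sup_{x ∈ [-1,1]} μ'(xθ)x² = f(z*)/θ², attained at x = z*/|θ| (and at x = -z*/|θ|). -/
noncomputable def f (z : ℝ) : ℝ := deriv μ z * z ^ 2

/-
Substituting z = xθ gives μ'(xθ)x² = f(xθ)/θ², so the bound is the maximality of z* and the
maximiser is any x with xθ = ±z*; both choices ±z*/|θ| work because μ' (hence f) is even.
-/

lemma μ_eq_sigmoid : μ = Real.sigmoid := by
  funext z
  rw [μ, Real.sigmoid_def, one_div]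

lemma deriv_μ_neg (z : ℝ) : deriv μ (-z) = deriv μ z := by
  simp only [μ_eq_sigmoid, Real.deriv_sigmoid, Real.sigmoid_neg]
  ring

lemma f_neg (z : ℝ) : f (-z) = f z := by
  rw [f, f, deriv_μ_neg, neg_sq]

lemma f_div_abs_mul (z : ℝ) {θ : ℝ} (hθ : θ ≠ 0) : f (z / |θ| * θ) = f z := by
  rcases abs_choice θ with h | h <;> rw [h]
  · rw [div_mul_cancel₀ z hθ]
  · rw [div_neg, neg_mul, div_mul_cancel₀ z hθ, f_neg]

lemma deriv_μ_mul_mul_sq (x : ℝ) {θ : ℝ} (hθ : θ ≠ 0) :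
    deriv μ (x * θ) * x ^ 2 = f (x * θ) / θ ^ 2 := by
  rw [f, eq_div_iff (pow_ne_zero 2 hθ)]
  ring

theorem one_dim_H_optimal_design_large_theta_general (θ zstar : ℝ) (hθ : θ ≠ 0)
    (hmax : ∀ z : ℝ, f z ≤ f zstar) :
    (∀ x ∈ Set.Icc (-1 : ℝ) 1, deriv μ (x * θ) * x ^ 2 ≤ f zstar / θ ^ 2) ∧
    deriv μ ((zstar / |θ|) * θ) * (zstar / |θ|) ^ 2 = f zstar / θ ^ 2 ∧
    deriv μ ((-(zstar / |θ|)) * θ) * (-(zstar / |θ|)) ^ 2 = f zstar / θ ^ 2 := by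
  refine ⟨fun x _ => ?_, ?_, ?_⟩
  · rw [deriv_μ_mul_mul_sq x hθ]
    gcongr
    exact hmax _
  · rw [deriv_μ_mul_mul_sq _ hθ, f_div_abs_mul zstar hθ]
  · rw [deriv_μ_mul_mul_sq _ hθ, neg_mul, f_neg, f_div_abs_mul zstar hθ]

theorem one_dim_H_optimal_design_large_theta (θ zstar : ℝ) (hθ : θ ≠ 0)
    (hzpos : 0 < zstar) (hmax : ∀ z : ℝ, f z ≤ f zstar) (hge : zstar ≤ |θ|) :
    (∀ x ∈ Set.Icc (-1 : ℝ) 1, deriv μ (x * θ) * x ^ 2 ≤ f zstar / θ ^ 2) ∧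
    deriv μ ((zstar / |θ|) * θ) * (zstar / |θ|) ^ 2 = f zstar / θ ^ 2 ∧
    deriv μ ((-(zstar / |θ|)) * θ) * (-(zstar / |θ|)) ^ 2 = f zstar / θ ^ 2 :=
  one_dim_H_optimal_design_large_theta_general θ zstar hθ hmax
end
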